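/- Marginal consistency plus phenomenological stalling implies internal stalling (Theorem 'mtctc'): Under the phenomenological setup with marginal consistency, if all phenomenological effective affinities vanish (∀ μ, Q μ = 0), then every marginal edge current vanishes at the stalling state, W i j * p j = W j i * p i for every (i,j) ∈ E, and the stalling state is a steady state of the full dynamics: W *ᵥ p = 0. -/

import Mathlib

/-!
With all effective affinities zero, marginal consistency says that the log-ratio of the two
one-way fluxes across every marginal edge vanishes, i.e. each marginal edge is in detailed
balance at `p`. The full generator splits as `W = W_hid + W_E`, where
`W_E = marginalGenerator E W` is the generator of the jumps along the marginal edges; detailed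
balance on the symmetric edge set `E` gives `W_E *ᵥ p = 0`, and `W_hid *ᵥ p = 0` by assumption.
-/

open Matrix Finset

theorem eq_of_log_div_eq_zero {a b : ℝ} (ha : 0 < a) (hb : 0 < b)
    (h : Real.log (a / b) = 0) : a = b :=
  (div_eq_one_iff_eq hb.ne').mp (Real.eq_one_of_pos_of_log_eq_zero (div_pos ha hb) h)

section MarginalGenerator

variable {n : ℕ} (E : Finset (Fin n × Fin n)) (W : Matrix (Fin n) (Fin n) ℝ)

noncomputable def marginalGenerator : Matrix (Fin n) (Fin n) ℝ :=
  of (fun i j => if (i, j) ∈ E then W i j else 0) -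
    diagonal (fun i => ∑ k ∈ univ.filter (fun k => (k, i) ∈ E), W k i)

theorem marginalGenerator_mulVec_eq_zero (hEsymm : ∀ i j, (i, j) ∈ E → (j, i) ∈ E)
    (p : Fin n → ℝ) (hbal : ∀ i j, (i, j) ∈ E → W i j * p j = W j i * p i) :
    marginalGenerator E W *ᵥ p = 0 := by
  funext i
  have hin : univ.filter (fun k => (k, i) ∈ E) = univ.filter (fun k => (i, k) ∈ E) := by
    ext k
    simpa using ⟨hEsymm k i, hEsymm i k⟩
  rw [marginalGenerator, sub_mulVec, Pi.sub_apply, mulVec_diagonal, Pi.zero_apply, hin, sum_mul]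
  simp only [mulVec, dotProduct, of_apply, ite_mul, zero_mul, ← sum_filter]
  exact sub_eq_zero.mpr (sum_congr rfl fun j hj => hbal i j (mem_filter.mp hj).2)

theorem sub_eq_marginalGenerator (Whid : Matrix (Fin n) (Fin n) ℝ)
    (hEne : ∀ i j, (i, j) ∈ E → i ≠ j)
    (hH1 : ∀ i j, (i, j) ∈ E → Whid i j = 0)
    (hH2 : ∀ i, Whid i i = W i i + ∑ j ∈ univ.filter (fun j => (j, i) ∈ E), W j i)
    (hH3 : ∀ i j, i ≠ j → (i, j) ∉ E → Whid i j = W i j) :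
    W - Whid = marginalGenerator E W := by
  ext i j
  simp only [marginalGenerator, Matrix.sub_apply, of_apply, diagonal_apply]
  by_cases hij : i = j
  · subst hij
    have hii : (i, i) ∉ E := fun h => hEne i i h rfl
    simp [hH2, hii]
  · by_cases hE : (i, j) ∈ E
    · simp [hE, hij, hH1 i j hE]
    · simp [hE, hij, hH3 i j hij hE]

end MarginalGenerator

theorem phenomenological_stalling_implies_internal_general {n m : ℕ}
    (W Whid : Matrix (Fin n) (Fin n) ℝ)
    (E : Finset (Fin n × Fin n))
    (hEsymm : ∀ i j, (i, j) ∈ E → (j, i) ∈ E)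
    (hEne : ∀ i j, (i, j) ∈ E → i ≠ j)
    (hEpos : ∀ i j, (i, j) ∈ E → 0 < W i j)
    (hH1 : ∀ i j, (i, j) ∈ E → Whid i j = 0)
    (hH2 : ∀ i, Whid i i = W i i + ∑ j ∈ Finset.univ.filter (fun j => (j, i) ∈ E), W j i)
    (hH3 : ∀ i j, i ≠ j → (i, j) ∉ E → Whid i j = W i j)
    (p : Fin n → ℝ) (hp1 : ∀ i, 0 < p i)
    (hp3 : Whid *ᵥ p = 0)
    (φ : Fin m → Fin n → Fin n → ℝ)
    (Q : Fin m → ℝ)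
    (hmc : ∀ i j, (i, j) ∈ E →
      Real.log (W i j * p j / (W j i * p i)) = ∑ μ, Q μ * φ μ i j) :
    (∀ μ, Q μ = 0) →
      ((∀ i j, (i, j) ∈ E → W i j * p j = W j i * p i) ∧ W *ᵥ p = 0) := by
  intro hQ
  have hbal : ∀ i j, (i, j) ∈ E → W i j * p j = W j i * p i := fun i j hij =>
    eq_of_log_div_eq_zero (mul_pos (hEpos i j hij) (hp1 j))
      (mul_pos (hEpos j i (hEsymm i j hij)) (hp1 i)) (by simp [hmc i j hij, hQ])
  refine ⟨hbal, ?_⟩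
  calc W *ᵥ p = (W - Whid) *ᵥ p + Whid *ᵥ p := by rw [sub_mulVec, sub_add_cancel]
    _ = 0 := by
      rw [sub_eq_marginalGenerator E W Whid hEne hH1 hH2 hH3,
        marginalGenerator_mulVec_eq_zero E W hEsymm p hbal, hp3, add_zero]

/-- Marginal consistency plus phenomenological stalling implies internal stalling
(Theorem "mtctc"). -/
theorem phenomenological_stalling_implies_internal {n m : ℕ}
    (W Whid : Matrix (Fin n) (Fin n) ℝ)
    (hW1 : ∀ i j, i ≠ j → 0 ≤ W i j)
    (hW2 : ∀ j, ∑ i, W i j = 0)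
    (E : Finset (Fin n × Fin n))
    (hEsymm : ∀ i j, (i, j) ∈ E → (j, i) ∈ E)
    (hEne : ∀ i j, (i, j) ∈ E → i ≠ j)
    (hEpos : ∀ i j, (i, j) ∈ E → 0 < W i j)
    (hH1 : ∀ i j, (i, j) ∈ E → Whid i j = 0)
    (hH2 : ∀ i, Whid i i = W i i + ∑ j ∈ Finset.univ.filter (fun j => (j, i) ∈ E), W j i)
    (hH3 : ∀ i j, i ≠ j → (i, j) ∉ E → Whid i j = W i j)
    (p : Fin n → ℝ) (hp1 : ∀ i, 0 < p i) (hp2 : ∑ i, p i = 1)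
    (hp3 : Whid *ᵥ p = 0)
    (φ : Fin m → Fin n → Fin n → ℝ)
    (hφ1 : ∀ μ i j, φ μ i j = -φ μ j i)
    (hφ2 : ∀ μ i j, (i, j) ∉ E → φ μ i j = 0)
    (Q : Fin m → ℝ)
    (hmc : ∀ i j, (i, j) ∈ E →
      Real.log (W i j * p j / (W j i * p i)) = ∑ μ, Q μ * φ μ i j) :
    (∀ μ, Q μ = 0) →
      ((∀ i j, (i, j) ∈ E → W i j * p j = W j i * p i) ∧ W *ᵥ p = 0) :=
  phenomenological_stalling_implies_internal_general W Whid E hEsymm hEne hEpos hH1 hH2 hH3 p hp1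
    hp3 φ Q hmc
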